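/- The channel max relative entropy D_max(M||N) := log_2 min{t ≥ 0 : tN - M is completely positive} is monotone under superchannels: for any quantum channels M, N ∈ CPTP(A→B) and any superchannel Θ mapping channels A→B to channels A'→B', D_max(Θ[M] || Θ[N]) ≤ D_max(M||N). -/

import Mathlib

open scoped BigOperators ComplexOrder

abbrev Mat (ι : Type) := Matrix ι ι ℂ
abbrev QMap (ι κ : Type) := Mat ι →ₗ[ℂ] Mat κ

noncomputable def choi {ι κ : Type} [Fintype ι] [DecidableEq ι] (N : QMap ι κ) :
    Matrix (ι × κ) (ι × κ) ℂ :=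
  Matrix.of fun p q => N (Matrix.single p.1 q.1 1) p.2 q.2

def IsCP {ι κ : Type} [Fintype ι] [DecidableEq ι] [Fintype κ] (N : QMap ι κ) : Prop :=
  (choi N).PosSemidef

def IsTP {ι κ : Type} [Fintype ι] [Fintype κ] (N : QMap ι κ) : Prop :=
  ∀ ρ : Mat ι, (N ρ).trace = ρ.trace

def IsCPTP {ι κ : Type} [Fintype ι] [DecidableEq ι] [Fintype κ] (N : QMap ι κ) : Prop :=
  IsCP N ∧ IsTP N

noncomputable def tensMap {ι1 κ1 ι2 κ2 : Type} [Fintype ι1] [DecidableEq ι1]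
    [Fintype ι2] [DecidableEq ι2]
    (M : QMap ι1 κ1) (N : QMap ι2 κ2) : QMap (ι1 × ι2) (κ1 × κ2) where
  toFun X := Matrix.of fun p q =>
    ∑ i : ι1, ∑ i' : ι1, ∑ j : ι2, ∑ j' : ι2,
      X (i, j) (i', j') *
        (M (Matrix.single i i' 1) p.1 q.1 * N (Matrix.single j j' 1) p.2 q.2)
  map_add' X Y := by
    ext p q
    simp [Matrix.add_apply, add_mul, Finset.sum_add_distrib]
  map_smul' c X := by
    ext p q
    simp [Matrix.smul_apply, Finset.mul_sum, smul_eq_mul, mul_assoc]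

noncomputable def reindexQ {ι κ : Type} {m k : ℕ} (e : ι ≃ Fin m) (f : κ ≃ Fin k)
    (N : QMap ι κ) : QMap (Fin m) (Fin k) where
  toFun X := (N (X.submatrix e e)).submatrix f.symm f.symm
  map_add' X Y := by
    simp [Matrix.submatrix_add, map_add]
  map_smul' c X := by
    simp [Matrix.submatrix_smul, map_smul]

noncomputable def tensChan {a1 b1 a2 b2 : ℕ}
    (M : QMap (Fin a1) (Fin b1)) (N : QMap (Fin a2) (Fin b2)) :
    QMap (Fin (a1 * a2)) (Fin (b1 * b2)) :=
  reindexQ finProdFinEquiv finProdFinEquiv (tensMap M N)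

noncomputable def superApply {a b a' b' r : ℕ}
    (E : QMap (Fin a') (Fin a × Fin r)) (F : QMap (Fin b × Fin r) (Fin b'))
    (N : QMap (Fin a) (Fin b)) : QMap (Fin a') (Fin b') :=
  F ∘ₗ tensMap N (LinearMap.id : QMap (Fin r) (Fin r)) ∘ₗ E

noncomputable def replacement {ι κ : Type} [Fintype ι] (σ : Mat κ) : QMap ι κ where
  toFun ω := ω.trace • σ
  map_add' x y := by simp [Matrix.trace_add, add_smul]
  map_smul' c x := by simp [Matrix.trace_smul, smul_smul]

def IsDensity {κ : Type} [Fintype κ] (σ : Mat κ) : Prop :=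
  σ.PosSemidef ∧ σ.trace = 1

-- Channel max relative entropy: log₂ min {t ≥ 0 : t·N - M is completely positive}.
open Classical in
noncomputable def DmaxChan {ι κ : Type} [Fintype ι] [DecidableEq ι] [Fintype κ]
    (M N : QMap ι κ) : EReal :=
  if ∃ t : ℝ, 0 ≤ t ∧ IsCP ((t : ℂ) • N - M)
  then ((Real.logb 2 (sInf {t : ℝ | 0 ≤ t ∧ IsCP ((t : ℂ) • N - M)}) : ℝ) : EReal)
  else ⊤

/-! If `t • N - M` is completely positive then so is `Θ[t • N - M] = t • Θ[N] - Θ[M]`: a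
superchannel is linear in its argument and preserves complete positivity, because the Choi
matrix of `P ⊗ Q` is a reindexed Kronecker product of Choi matrices and CP maps compose (via
Kraus decompositions). Hence the set of feasible scalings only grows under `Θ`, and its infimum
can only drop. Passing to `logb 2` needs care since `logb 2 0 = 0`: the Choi matrix of a
trace-preserving map on `ι` has trace `card ι`, so every feasible `t` is at least `1` unless `ι`
is empty, and each infimum is either `0` or at least `1`. -/

open scoped Matrix Kronecker

section Choi

variable {ι κ : Type} [Fintype ι] [DecidableEq ι]

lemma choi_injective : Function.Injective (choi : QMap ι κ → Matrix (ι × κ) (ι × κ) ℂ) := by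
  intro M N h
  apply Matrix.ext_linearMap
  intro i j
  ext k k' : 3
  exact congr_fun₂ h (i, k) (j, k')

@[simp]
lemma choi_sub (M N : QMap ι κ) : choi (M - N) = choi M - choi N := rfl

@[simp]
lemma choi_smul (c : ℂ) (N : QMap ι κ) : choi (c • N) = c • choi N := rfl

lemma isCP_of_isEmpty [Fintype κ] [IsEmpty ι] (N : QMap ι κ) : IsCP N := by
  rw [IsCP, Subsingleton.elim (choi N) 0]
  exact Matrix.PosSemidef.zero

end Choi

section Kraus

variable {ι κ μ T : Type} [Fintype ι] [Fintype T]

noncomputable def krausMap (A : T → Matrix κ ι ℂ) : QMap ι κ where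
  toFun X := ∑ m, A m * X * (A m)ᴴ
  map_add' X Y := by simp only [Matrix.mul_add, Matrix.add_mul, Finset.sum_add_distrib]
  map_smul' c X := by
    simp only [Matrix.mul_smul, Matrix.smul_mul, Finset.smul_sum, RingHom.id_apply]

lemma krausMap_apply (A : T → Matrix κ ι ℂ) (X : Mat ι) :
    krausMap A X = ∑ m, A m * X * (A m)ᴴ := rfl

lemma krausMap_comp_krausMap [Fintype κ] {S : Type} [Fintype S] (A : S → Matrix μ κ ℂ)
    (C : T → Matrix κ ι ℂ) :
    krausMap A ∘ₗ krausMap C = krausMap fun m : S × T => A m.1 * C m.2 := by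
  ext X : 1
  simp only [LinearMap.comp_apply, krausMap_apply, Fintype.sum_prod_type, Matrix.mul_sum,
    Matrix.sum_mul, Matrix.conjTranspose_mul, Matrix.mul_assoc]

variable [DecidableEq ι]

lemma choi_krausMap (A : T → Matrix κ ι ℂ) :
    choi (krausMap A) = (Matrix.of fun m (p : ι × κ) => star (A m p.2 p.1))ᴴ *
      Matrix.of fun m (p : ι × κ) => star (A m p.2 p.1) := by
  ext p q
  simp [choi, krausMap_apply, Matrix.sum_apply, Matrix.mul_apply, Matrix.single_apply, ite_and,
    Finset.sum_ite_eq]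

variable [Fintype κ]

lemma isCP_krausMap (A : T → Matrix κ ι ℂ) : IsCP (krausMap A) := by
  rw [IsCP, choi_krausMap]
  exact Matrix.posSemidef_conjTranspose_mul_self _

open scoped MatrixOrder in
lemma IsCP.exists_eq_krausMap [DecidableEq κ] {N : QMap ι κ} (hN : IsCP N) :
    ∃ A : ι × κ → Matrix κ ι ℂ, N = krausMap A := by
  obtain ⟨B, hB⟩ := CStarAlgebra.nonneg_iff_eq_star_mul_self.mp hN.nonneg
  refine ⟨fun m => Matrix.of fun k i => star (B m (i, k)), choi_injective ?_⟩
  rw [hB, choi_krausMap, Matrix.star_eq_conjTranspose]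
  simp only [Matrix.of_apply, star_star]
  rfl

lemma IsCP.comp [DecidableEq κ] [Fintype μ] [DecidableEq μ] {P : QMap κ μ} {Q : QMap ι κ}
    (hP : IsCP P) (hQ : IsCP Q) : IsCP (P ∘ₗ Q) := by
  obtain ⟨A, rfl⟩ := hP.exists_eq_krausMap
  obtain ⟨C, rfl⟩ := hQ.exists_eq_krausMap
  rw [krausMap_comp_krausMap]
  exact isCP_krausMap _

end Kraus

section TensorProduct

variable {ι₁ κ₁ ι₂ κ₂ : Type} [Fintype ι₁] [DecidableEq ι₁] [Fintype ι₂] [DecidableEq ι₂]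

lemma tensMap_single_apply (P : QMap ι₁ κ₁) (Q : QMap ι₂ κ₂) (i i' : ι₁) (j j' : ι₂)
    (k k' : κ₁) (l l' : κ₂) :
    tensMap P Q (Matrix.single (i, j) (i', j') 1) (k, l) (k', l') =
      P (Matrix.single i i' 1) k k' * Q (Matrix.single j j' 1) l l' := by
  simp [tensMap, Matrix.single_apply, ite_and, Finset.sum_ite_eq]

lemma choi_tensMap (P : QMap ι₁ κ₁) (Q : QMap ι₂ κ₂) :
    choi (tensMap P Q) =
      (choi P ⊗ₖ choi Q).submatrix (Equiv.prodProdProdComm ι₁ ι₂ κ₁ κ₂)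
        (Equiv.prodProdProdComm ι₁ ι₂ κ₁ κ₂) := by
  ext ⟨⟨i, j⟩, k, l⟩ ⟨⟨i', j'⟩, k', l'⟩
  exact tensMap_single_apply P Q i i' j j' k k' l l'

lemma isCP_id : IsCP (LinearMap.id : QMap ι₁ ι₁) := by
  have hchoi : choi (LinearMap.id : QMap ι₁ ι₁) =
      Matrix.vecMulVec (fun p => if p.1 = p.2 then 1 else 0)
        (star fun p => if p.1 = p.2 then 1 else 0) := by
    ext ⟨i, k⟩ ⟨i', k'⟩
    by_cases i = k <;> simp [choi, Matrix.vecMulVec_apply, Matrix.single_apply, ite_and, *]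
  rw [IsCP, hchoi]
  exact Matrix.posSemidef_vecMulVec_self_star _

lemma IsCP.tensMap [Fintype κ₁] [Fintype κ₂] {P : QMap ι₁ κ₁} {Q : QMap ι₂ κ₂} (hP : IsCP P)
    (hQ : IsCP Q) : IsCP (tensMap P Q) := by
  rw [IsCP, choi_tensMap]
  exact (hP.kronecker hQ).submatrix _

lemma tensMap_sub_left (P P' : QMap ι₁ κ₁) (Q : QMap ι₂ κ₂) :
    tensMap (P - P') Q = tensMap P Q - tensMap P' Q := by
  ext X p q
  simp [tensMap, sub_mul, mul_sub]

lemma tensMap_smul_left (c : ℂ) (P : QMap ι₁ κ₁) (Q : QMap ι₂ κ₂) :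
    tensMap (c • P) Q = c • tensMap P Q := by
  ext X p q
  simp [tensMap, Finset.mul_sum, mul_assoc, mul_left_comm _ c]

lemma trace_single_one (i i' : ι₁) :
    (Matrix.single i i' (1 : ℂ)).trace = if i = i' then 1 else 0 := by
  split_ifs with h
  · exact h ▸ Matrix.trace_single_eq_same i 1
  · exact Matrix.trace_single_eq_of_ne i i' 1 h

lemma IsTP.tensMap [Fintype κ₁] [Fintype κ₂] {P : QMap ι₁ κ₁} {Q : QMap ι₂ κ₂} (hP : IsTP P)
    (hQ : IsTP Q) : IsTP (tensMap P Q) := by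
  suffices h : Matrix.traceLinearMap _ ℂ ℂ ∘ₗ _root_.tensMap P Q =
      Matrix.traceLinearMap _ ℂ ℂ from fun X => LinearMap.congr_fun h X
  apply Matrix.ext_linearMap
  rintro ⟨i, j⟩ ⟨i', j'⟩
  refine LinearMap.ext_ring ?_
  have hPQ : (_root_.tensMap P Q (Matrix.single (i, j) (i', j') 1)).trace =
      (P (Matrix.single i i' 1)).trace * (Q (Matrix.single j j' 1)).trace := by
    simp only [Matrix.trace, Matrix.diag, Fintype.sum_prod_type, tensMap_single_apply,
      Finset.sum_mul_sum]
  simp only [LinearMap.comp_apply, Matrix.traceLinearMap_apply, Matrix.singleLinearMap_apply,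
    hPQ, hP _, hQ _, trace_single_one, ite_zero_mul_ite_zero, mul_one, Prod.mk.injEq]

end TensorProduct

lemma isTP_id {ι : Type} [Fintype ι] : IsTP (LinearMap.id : QMap ι ι) := fun _ => rfl

lemma IsTP.comp {ι κ μ : Type} [Fintype ι] [Fintype κ] [Fintype μ] {P : QMap κ μ}
    {Q : QMap ι κ} (hP : IsTP P) (hQ : IsTP Q) : IsTP (P ∘ₗ Q) :=
  fun X => (hP (Q X)).trans (hQ X)

section Superchannel

variable {a b a' b' r : ℕ} {E : QMap (Fin a') (Fin a × Fin r)}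
  {F : QMap (Fin b × Fin r) (Fin b')}

lemma superApply_sub (M N : QMap (Fin a) (Fin b)) :
    superApply E F (M - N) = superApply E F M - superApply E F N := by
  simp only [superApply, tensMap_sub_left, LinearMap.sub_comp, LinearMap.comp_sub]

lemma superApply_smul (c : ℂ) (N : QMap (Fin a) (Fin b)) :
    superApply E F (c • N) = c • superApply E F N := by
  simp only [superApply, tensMap_smul_left, LinearMap.smul_comp, LinearMap.comp_smul]

lemma IsCP.superApply {N : QMap (Fin a) (Fin b)} (hN : IsCP N) (hE : IsCP E) (hF : IsCP F) :
    IsCP (superApply E F N) :=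
  hF.comp ((hN.tensMap isCP_id).comp hE)

lemma IsTP.superApply {N : QMap (Fin a) (Fin b)} (hN : IsTP N) (hE : IsTP E) (hF : IsTP F) :
    IsTP (superApply E F N) :=
  hF.comp ((hN.tensMap isTP_id).comp hE)

end Superchannel

lemma logb_le_logb_of_eq_zero_or_one_le {b x y : ℝ} (hb : 1 < b) (hx : x = 0 ∨ 1 ≤ x)
    (hy : y = 0 ∨ 1 ≤ y) (hxy : x ≤ y) : Real.logb b x ≤ Real.logb b y := by
  rcases hx with rfl | hx
  · rcases hy with rfl | hy
    · rfl
    · simpa using Real.logb_nonneg hb hy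
  · exact Real.logb_le_logb_of_le hb (by linarith) hxy

section MaxRelativeEntropy

variable {ι κ : Type} [Fintype ι] [DecidableEq ι] [Fintype κ]

def dmaxFeasible (M N : QMap ι κ) : Set ℝ := {t | 0 ≤ t ∧ IsCP ((t : ℂ) • N - M)}

open Classical in
lemma DmaxChan_eq_ite (M N : QMap ι κ) :
    DmaxChan M N = if (dmaxFeasible M N).Nonempty
      then ((Real.logb 2 (sInf (dmaxFeasible M N)) : ℝ) : EReal) else ⊤ := rfl

lemma trace_choi_of_isTP {N : QMap ι κ} (hN : IsTP N) : (choi N).trace = Fintype.card ι := by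
  have hdiag : ∀ i, ∑ k, N (Matrix.single i i 1) k k = 1 := fun i =>
    (hN _).trans (Matrix.trace_single_eq_same i 1)
  simp [Matrix.trace, choi, Fintype.sum_prod_type, hdiag]

lemma one_le_of_isCP_smul_sub [Nonempty ι] {M N : QMap ι κ} (hM : IsTP M) (hN : IsTP N) {t : ℝ}
    (h : IsCP ((t : ℂ) • N - M)) : 1 ≤ t := by
  have htr := h.trace_nonneg
  rw [choi_sub, choi_smul, Matrix.trace_sub, Matrix.trace_smul, trace_choi_of_isTP hN,
    trace_choi_of_isTP hM, smul_eq_mul, ← sub_one_mul] at htr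
  have hcard : (0 : ℝ) < Fintype.card ι := by exact_mod_cast Fintype.card_pos
  have hreal : 0 ≤ (t - 1) * Fintype.card ι := by exact_mod_cast htr
  nlinarith

lemma sInf_dmaxFeasible_eq_zero_or_one_le {M N : QMap ι κ} (hM : IsTP M) (hN : IsTP N) :
    sInf (dmaxFeasible M N) = 0 ∨ 1 ≤ sInf (dmaxFeasible M N) := by
  rcases isEmpty_or_nonempty ι with hι | hι
  · left
    have hall : dmaxFeasible M N = Set.Ici 0 :=
      Set.ext fun t => and_iff_left (isCP_of_isEmpty _)
    rw [hall, csInf_Ici]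
  · rcases (dmaxFeasible M N).eq_empty_or_nonempty with h | h
    · left
      rw [h, Real.sInf_empty]
    · right
      exact le_csInf h fun t ht => one_le_of_isCP_smul_sub hM hN ht.2

lemma DmaxChan_le_of_dmaxFeasible_subset {ι' κ' : Type} [Fintype ι'] [DecidableEq ι']
    [Fintype κ'] {M N : QMap ι κ} {M' N' : QMap ι' κ'} (hM : IsTP M) (hN : IsTP N)
    (hM' : IsTP M') (hN' : IsTP N') (h : dmaxFeasible M N ⊆ dmaxFeasible M' N') :
    DmaxChan M' N' ≤ DmaxChan M N := by
  rw [DmaxChan_eq_ite, DmaxChan_eq_ite]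
  by_cases hne : (dmaxFeasible M N).Nonempty
  · rw [if_pos (hne.mono h), if_pos hne, EReal.coe_le_coe_iff]
    exact logb_le_logb_of_eq_zero_or_one_le one_lt_two
      (sInf_dmaxFeasible_eq_zero_or_one_le hM' hN') (sInf_dmaxFeasible_eq_zero_or_one_le hM hN)
      (csInf_le_csInf ⟨0, fun _ ht => ht.1⟩ hne h)
  · rw [if_neg hne]
    exact le_top

end MaxRelativeEntropy

/-- The channel max relative entropy is monotone under superchannels. -/
theorem stmt10
    (a b a' b' r : ℕ) (M N : QMap (Fin a) (Fin b))
    (E : QMap (Fin a') (Fin a × Fin r)) (F : QMap (Fin b × Fin r) (Fin b'))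
    (hM : IsCPTP M) (hN : IsCPTP N) (hE : IsCPTP E) (hF : IsCPTP F) :
    DmaxChan (superApply E F M) (superApply E F N) ≤ DmaxChan M N := by
  refine DmaxChan_le_of_dmaxFeasible_subset hM.2 hN.2 (hM.2.superApply hE.2 hF.2)
    (hN.2.superApply hE.2 hF.2) ?_
  rintro t ⟨ht, hcp⟩
  refine ⟨ht, ?_⟩
  rw [← superApply_smul, ← superApply_sub]
  exact hcp.superApply hE.1 hF.1
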